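/- arXiv:1510.06641 — 5 statements merged into one kernel-verified Lean document; each statement's English description precedes it below -/
import Mathlib

section
/- Let A be a commutative unital complex Banach algebra, X a nonempty set, and f : X → A a function. Define the vector-valued spectrum of f as the set of functions λ : X → ℂ such that 1 does not lie in the ideal of A generated by {λ(x)·1 - f(x) : x ∈ X}. Then a function λ : X → ℂ belongs to the vector-valued spectrum of f if and only if there exists a character φ in the character space of A with λ = φ ∘ f. -/
open WeakDual

/-- The vector-valued spectrum of `f : X → A` (functions `λ : X → ℂ` such that
`1` is not in the ideal generated by `{λ(x)·1 - f(x)}`) equals `{φ ∘ f : φ ∈ characterSpace}`. -/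
theorem vector_valued_spectrum_eq_characters
    {A : Type*} [NormedCommRing A] [NormedAlgebra ℂ A] [CompleteSpace A]
    {X : Type*} [Nonempty X] (f : X → A) (lam : X → ℂ) :
    (1 : A) ∉ Ideal.span {a : A | ∃ x : X, a = lam x • (1 : A) - f x} ↔
      ∃ φ : characterSpace ℂ A, lam = fun x => φ (f x) := by
  constructor
  · intro h1
    have hne : Ideal.span {a : A | ∃ x : X, a = lam x • (1 : A) - f x} ≠ ⊤ := by
      intro h; exact h1 (h ▸ Submodule.mem_top)
    obtain ⟨M, hM, hle⟩ := Ideal.exists_le_maximal _ hne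
    refine ⟨M.toCharacterSpace, funext fun x => ?_⟩
    have hmem : lam x • (1 : A) - f x ∈ M :=
      hle (Ideal.subset_span ⟨x, rfl⟩)
    have := M.toCharacterSpace_apply_eq_zero_of_mem hmem
    rw [map_sub, sub_eq_zero] at this
    simpa using this
  · rintro ⟨φ, rfl⟩ h1
    have hker : Ideal.span {a : A | ∃ x : X, a = φ (f x) • (1 : A) - f x} ≤
        RingHom.ker (φ : A →+* ℂ) := by
      rw [Ideal.span_le]
      rintro a ⟨x, rfl⟩
      simp [RingHom.mem_ker]
    have := hker h1
    simp [RingHom.mem_ker] at this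
end

section
/- Let A be a commutative unital complex Banach algebra and I : A → A the identity map. Then the vector-valued spectrum of I equals the character space of A: a function λ : A → ℂ satisfies '1 is not in the ideal generated by {λ(a)·1 - a : a ∈ A}' if and only if λ is a character of A. -/
open WeakDual

/-- The vector-valued spectrum of the identity map `I : A → A` is exactly the
character space of `A`. -/
theorem spectrum_of_identity_eq_characterSpace
    {A : Type*} [NormedCommRing A] [NormedAlgebra ℂ A] [CompleteSpace A]
    (lam : A → ℂ) :
    (1 : A) ∉ Ideal.span {b : A | ∃ a : A, b = lam a • (1 : A) - a} ↔
      ∃ φ : characterSpace ℂ A, lam = ⇑φ := by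
  constructor
  · intro h
    have hne : Ideal.span {b : A | ∃ a : A, b = lam a • (1 : A) - a} ≠ ⊤ := by
      intro ht; exact h (ht ▸ Submodule.mem_top)
    obtain ⟨M, hM, hle⟩ := Ideal.exists_le_maximal _ hne
    refine ⟨M.toCharacterSpace, funext fun a => ?_⟩
    have hmem : lam a • (1 : A) - a ∈ M :=
      hle (Ideal.subset_span ⟨a, rfl⟩)
    have := M.toCharacterSpace_apply_eq_zero_of_mem hmem
    have h1 : M.toCharacterSpace (lam a • (1 : A) - a)
        = lam a - M.toCharacterSpace a := by
      simp [map_sub, map_smul]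
    rw [h1] at this
    exact sub_eq_zero.mp this
  · rintro ⟨φ, rfl⟩ h
    have hker : Ideal.span {b : A | ∃ a : A, b = φ a • (1 : A) - a} ≤
        RingHom.ker (φ : A →+* ℂ) := by
      rw [Ideal.span_le]
      rintro b ⟨a, rfl⟩
      simp [RingHom.mem_ker, map_sub, map_smul]
    have : φ (1 : A) = 0 := hker h
    simp at this
end

section
/- Let X be a compact Hausdorff space, A a commutative unital complex Banach algebra, and f : X → A continuous. Then the vector-valued spectrum of f is closed in C(X, ℂ) with the uniform norm: if λ ∈ C(X) is a uniform limit of functions of the form φₙ ∘ f with φₙ characters of A, then λ = φ ∘ f for some character φ of A. -/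
/-!
The character space is weak-* compact (Banach–Alaoglu), and `φ ↦ φ ∘ f` is continuous into
`X → ℂ` with the product topology, so its image is closed even for pointwise convergence;
a uniform limit is in particular a pointwise limit.
-/

open WeakDual Filter Topology

namespace WeakDual.CharacterSpace

variable {𝕜 A X : Type*}

theorem continuous_pi_apply_comp [CommSemiring 𝕜] [TopologicalSpace 𝕜] [ContinuousAdd 𝕜]
    [ContinuousConstSMul 𝕜 𝕜] [NonUnitalNonAssocSemiring A] [TopologicalSpace A] [Module 𝕜 A]
    (f : X → A) : Continuous fun (φ : characterSpace 𝕜 A) (x : X) => φ (f x) :=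
  continuous_pi fun x => (eval_continuous (f x)).comp continuous_subtype_val

section Normed

variable [NontriviallyNormedField 𝕜] [ProperSpace 𝕜] [NormedRing A] [NormedAlgebra 𝕜 A]
  [CompleteSpace A]

theorem isClosed_range_pi_apply_comp (f : X → A) :
    IsClosed (Set.range fun (φ : characterSpace 𝕜 A) (x : X) => φ (f x)) :=
  (isCompact_range (continuous_pi_apply_comp f)).isClosed

theorem exists_eq_apply_comp_of_tendsto {ι : Type*} {l : Filter ι} [l.NeBot] (f : X → A)
    (φs : ι → characterSpace 𝕜 A) (lam : X → 𝕜)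
    (h : ∀ x, Tendsto (fun n => φs n (f x)) l (𝓝 (lam x))) :
    ∃ φ : characterSpace 𝕜 A, ∀ x, lam x = φ (f x) := by
  obtain ⟨φ, hφ⟩ := (isClosed_range_pi_apply_comp f).mem_of_tendsto (tendsto_pi_nhds.2 h)
    (Eventually.of_forall fun n => ⟨φs n, rfl⟩)
  exact ⟨φ, fun x => (congrFun hφ x).symm⟩

end Normed

end WeakDual.CharacterSpace

theorem spectrum_isClosed_general
    {X : Type*} [TopologicalSpace X]
    {A : Type*} [NormedCommRing A] [NormedAlgebra ℂ A] [CompleteSpace A]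
    (f : C(X, A)) (lam : X → ℂ)
    (φs : ℕ → characterSpace ℂ A)
    (hconv : TendstoUniformly (fun n x => φs n (f x)) lam Filter.atTop) :
    ∃ φ : characterSpace ℂ A, ∀ x : X, lam x = φ (f x) :=
  CharacterSpace.exists_eq_apply_comp_of_tendsto f φs lam fun x => hconv.tendsto_at x

/-- The vector-valued spectrum of a continuous `f : X → A` is uniformly closed:
a uniform limit of functions `φₙ ∘ f` (with `φₙ` characters of `A`) is of the form `φ ∘ f`
for some character `φ`. -/
theorem spectrum_isClosed
    {X : Type*} [TopologicalSpace X] [CompactSpace X] [T2Space X]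
    {A : Type*} [NormedCommRing A] [NormedAlgebra ℂ A] [CompleteSpace A]
    (f : C(X, A)) (lam : X → ℂ) (hlam : Continuous lam)
    (φs : ℕ → characterSpace ℂ A)
    (hconv : TendstoUniformly (fun n x => φs n (f x)) lam Filter.atTop) :
    ∃ φ : characterSpace ℂ A, ∀ x : X, lam x = φ (f x) :=
  spectrum_isClosed_general f lam φs hconv
end

section
/- Let X be a compact Hausdorff space, A a commutative unital complex Banach algebra, and suppose fₙ → f uniformly on X (fₙ, f continuous X → A), λₙ is in the vector-valued spectrum of fₙ for each n, and λₙ → λ uniformly in C(X). Then λ lies in the vector-valued spectrum of f. -/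
open WeakDual

/-- If `fₙ → f` uniformly on `X`, `λₙ` lies in the vector-valued spectrum of
`fₙ` for each `n`, and `λₙ → λ` uniformly, then `λ` lies in the vector-valued spectrum
of `f`. -/
theorem spectrum_upper_semicontinuous_limit
    {X : Type*} [TopologicalSpace X] [CompactSpace X] [T2Space X]
    {A : Type*} [NormedCommRing A] [NormedAlgebra ℂ A] [CompleteSpace A]
    (f : X → A) (F : ℕ → X → A) (hf : Continuous f) (hF : ∀ n, Continuous (F n))
    (hFconv : TendstoUniformly F f Filter.atTop)
    (lam : X → ℂ) (lams : ℕ → X → ℂ)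
    (hlams : ∀ n, (1 : A) ∉ Ideal.span {a : A | ∃ x : X, a = lams n x • (1 : A) - F n x})
    (hlconv : TendstoUniformly lams lam Filter.atTop) :
    (1 : A) ∉ Ideal.span {a : A | ∃ x : X, a = lam x • (1 : A) - f x} := by
  -- Step 1: obtain characters φ n with φ n (F n x) = lams n x
  have hchar : ∀ n, ∃ φ : characterSpace ℂ A, ∀ x, φ (F n x) = lams n x := by
    intro n
    obtain ⟨M, hM, hle⟩ := (Ideal.span _).exists_le_maximal
      ((Ideal.ne_top_iff_one _).mpr (hlams n))
    refine ⟨M.toCharacterSpace, fun x => ?_⟩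
    have h1 : M.toCharacterSpace (lams n x • (1 : A) - F n x) = 0 :=
      M.toCharacterSpace_apply_eq_zero_of_mem (hle (Ideal.subset_span ⟨x, rfl⟩))
    rw [map_sub, map_smul, map_one, smul_eq_mul, mul_one, sub_eq_zero] at h1
    exact h1.symm
  choose φ hφ using hchar
  -- Step 2: take a cluster point ψ of the sequence φ in the compact character space
  obtain ⟨ψ, hψ⟩ := exists_clusterPt_of_compactSpace (Filter.map φ Filter.atTop)
  -- Step 3: ψ (f x) = lam x for each x
  have key : ∀ x, ψ (f x) = lam x := by
    intro x
    -- pointwise convergence: φ n (f x) → lam x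
    have hFp : Filter.Tendsto (fun n => F n x) Filter.atTop (nhds (f x)) :=
      hFconv.tendsto_at x
    have hnorm : Filter.Tendsto (fun n => ‖F n x - f x‖) Filter.atTop (nhds 0) :=
      (tendsto_iff_norm_sub_tendsto_zero).mp hFp
    have herr : Filter.Tendsto (fun n => (φ n) (f x) - lams n x) Filter.atTop (nhds 0) := by
      refine squeeze_zero_norm (a := fun n => ‖f x - F n x‖ * ‖(1 : A)‖) (fun n => ?_) ?_
      · 
        have : (φ n) (f x) - lams n x = (φ n) (f x - F n x) := by
          rw [map_sub, hφ n x]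
        rw [this]
        exact spectrum.norm_le_norm_mul_of_mem (WeakDual.CharacterSpace.apply_mem_spectrum (φ n) _)
      · have : Filter.Tendsto (fun n => ‖f x - F n x‖) Filter.atTop (nhds 0) := by
          simpa [norm_sub_rev] using hnorm
        simpa using this.mul_const ‖(1 : A)‖
    have hlamp : Filter.Tendsto (fun n => lams n x) Filter.atTop (nhds (lam x)) :=
      hlconv.tendsto_at x
    have hconv : Filter.Tendsto (fun n => (φ n) (f x)) Filter.atTop (nhds (lam x)) := by
      have := herr.add hlamp
      simpa using this
    -- ψ (f x) is a cluster point of fun n => φ n (f x)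
    have hev : Continuous fun χ : characterSpace ℂ A => χ (f x) :=
      (eval_continuous (f x)).comp continuous_subtype_val
    have hcp : ClusterPt (ψ (f x)) (Filter.map (fun n => (φ n) (f x)) Filter.atTop) :=
      hψ.map hev.continuousAt
        (by rw [Filter.tendsto_map'_iff]; exact Filter.tendsto_map)
    -- in a Hausdorff space, cluster points of a convergent sequence equal the limit
    have hne : (nhds (ψ (f x)) ⊓ nhds (lam x)).NeBot :=
      hcp.neBot.mono (inf_le_inf_left _ hconv)
    exact eq_of_nhds_neBot hne
  -- Step 4: conclude
  intro hmem
  have hsub : Ideal.span {a : A | ∃ x : X, a = lam x • (1 : A) - f x} ≤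
      RingHom.ker (ψ : A →+* ℂ) := by
    rw [Ideal.span_le]
    rintro a ⟨x, rfl⟩
    simp only [SetLike.mem_coe, RingHom.mem_ker]
    show (ψ : A →+* ℂ) (lam x • (1 : A) - f x) = 0
    rw [RingHom.coe_coe, map_sub, map_smul, map_one, smul_eq_mul, mul_one, key x, sub_self]
  have := hsub hmem
  rw [RingHom.mem_ker, map_one] at this
  exact one_ne_zero this
end

section
/- Let X be a compact Hausdorff space and A a commutative unital semisimple complex Banach algebra. For each f ∈ C(X, A) define the A-valued spectrum of f as the set of a ∈ A whose Gelfand transform â lies in the vector-valued spectrum of the map f̃ : characterSpace(A) → C(X), φ ↦ φ ∘ f, taken with respect to the algebra C(X, A). Then for every f ∈ C(X, A), the A-valued spectrum of f equals the range f(X) = {f(x) : x ∈ X}. -/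
open WeakDual

/-- For a character `φ` of `A` and `f ∈ C(X, A)`, the complex-valued function
`φ ∘ f ∈ C(X, ℂ)`. -/
noncomputable def charCompC {X : Type*} [TopologicalSpace X] {A : Type*} [NormedCommRing A]
    [NormedAlgebra ℂ A] (φ : characterSpace ℂ A) (f : C(X, A)) : C(X, ℂ) :=
  ⟨fun x => φ (f x), (map_continuous φ).comp f.continuous⟩

/-- For `X` compact Hausdorff and `A` a commutative unital semisimple complex
Banach algebra, the `A`-valued spectrum of `f ∈ C(X, A)` — the set of `a ∈ A` whose Gelfand
transform lies in the vector-valued spectrum of `f̃ : φ ↦ φ ∘ f`, computed in the algebra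
`C(X, ℂ)` — equals the range `f(X)`. -/
theorem A_valued_spectrum_of_CXA_eq_range
    {X : Type*} [TopologicalSpace X] [CompactSpace X] [T2Space X]
    {A : Type*} [NormedCommRing A] [NormedAlgebra ℂ A] [CompleteSpace A]
    (hsemi : ∀ a b : A, (∀ φ : characterSpace ℂ A, φ a = φ b) → a = b)
    (f : C(X, A)) :
    {a : A | (1 : C(X, ℂ)) ∉ Ideal.span
        {g : C(X, ℂ) | ∃ φ : characterSpace ℂ A,
          g = φ a • (1 : C(X, ℂ)) - charCompC φ f}}
      = Set.range f := by
  ext a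
  simp only [Set.mem_setOf_eq, Set.mem_range]
  constructor
  · -- a not in range ⟹ 1 ∈ span (contrapositive)
    intro h
    by_contra hnr
    push_neg at hnr
    apply h
    -- for each x, pick a character separating f x and a
    have key : ∀ x : X, ∃ φ : characterSpace ℂ A, φ a ≠ φ (f x) := by
      intro x
      by_contra hc
      push_neg at hc
      exact hnr x (hsemi (f x) a fun φ => (hc φ).symm)
    choose φ hφ using key
    set g : X → C(X, ℂ) := fun x =>
      (φ x) a • (1 : C(X, ℂ)) - charCompC (φ x) f with hg
    have hgmem : ∀ x, g x ∈ ({g : C(X, ℂ) | ∃ φ : characterSpace ℂ A,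
        g = φ a • (1 : C(X, ℂ)) - charCompC φ f}) := fun x => ⟨φ x, rfl⟩
    -- the sets where g x ≠ 0 cover X
    have hcover : (Set.univ : Set X) ⊆ ⋃ x : X, {y | g x y ≠ 0} := by
      intro y _
      refine Set.mem_iUnion.2 ⟨y, ?_⟩
      simp only [hg, Set.mem_setOf_eq, ContinuousMap.sub_apply, ContinuousMap.smul_apply,
        ContinuousMap.one_apply, smul_eq_mul, mul_one, charCompC, ContinuousMap.coe_mk]
      exact sub_ne_zero.mpr (hφ y)
    obtain ⟨s, hs⟩ := isCompact_univ.elim_finite_subcover (fun x : X => {y | g x y ≠ 0})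
      (fun x => isOpen_compl_iff.mpr (isClosed_eq (map_continuous (g x)) continuous_const)) hcover
    -- build h = ∑ star (g i) * g i
    set h : C(X, ℂ) := ∑ i ∈ s, star (g i) * g i with hh
    have hmem : h ∈ Ideal.span {g : C(X, ℂ) | ∃ φ : characterSpace ℂ A,
        g = φ a • (1 : C(X, ℂ)) - charCompC φ f} := by
      refine Ideal.sum_mem _ fun i _ => ?_
      exact Ideal.mul_mem_left _ _ (Ideal.subset_span (hgmem i))
    have hunit : IsUnit h := by
      rw [ContinuousMap.isUnit_iff_forall_isUnit]
      intro y
      rw [isUnit_iff_ne_zero]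
      obtain ⟨i, hi, hiy⟩ := Set.mem_iUnion₂.mp (hs (Set.mem_univ y))
      have hy : h y = ∑ i ∈ s, star (g i y) * g i y := by
        simp [hh]
      rw [hy]
      have hsum : (∑ i ∈ s, star (g i y) * g i y) =
          ∑ i ∈ s, ((Complex.normSq (g i y) : ℝ) : ℂ) := by
        refine Finset.sum_congr rfl fun i _ => ?_
        rw [Complex.star_def, mul_comm, Complex.mul_conj]
      rw [hsum, ← Complex.ofReal_sum]
      rw [Ne, Complex.ofReal_eq_zero]
      have hpos : 0 < ∑ i ∈ s, Complex.normSq (g i y) := by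
        refine Finset.sum_pos' (fun i _ => Complex.normSq_nonneg _) ⟨i, hi, ?_⟩
        exact Complex.normSq_pos.mpr hiy
      exact ne_of_gt hpos
    rw [Ideal.eq_top_of_isUnit_mem _ hmem hunit]
    exact Submodule.mem_top
  · -- a = f x ⟹ 1 ∉ span
    rintro ⟨x, rfl⟩ h1
    have hker : Ideal.span {g : C(X, ℂ) | ∃ φ : characterSpace ℂ A,
        g = φ (f x) • (1 : C(X, ℂ)) - charCompC φ f} ≤
        RingHom.ker ((ContinuousMap.evalAlgHom ℂ ℂ x : C(X, ℂ) →ₐ[ℂ] ℂ) : C(X, ℂ) →+* ℂ) := by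
      rw [Ideal.span_le]
      rintro g ⟨φ, rfl⟩
      simp [RingHom.mem_ker, charCompC]
    have := hker h1
    simp [RingHom.mem_ker] at this
end
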